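/- Let M ≥ 1 and let S ⊆ {1, …, M} be the set of blocks performing global self-attention, with |S| = T. For each block m ∈ {1, …, M} let Â_m, F_m : E → E with Â_m ρ_m-Lipschitz and F_m θ_m-Lipschitz (ρ_m, θ_m > 0), and for m ∉ S let A_m : E → E satisfy ‖A_m X − Â_m X‖_F ≤ σ_m for all X ∈ E (σ_m ≥ 0). Starting from the same input X^{emb} ∈ E, let the FedAttn trajectory apply X ↦ X + A_m(X) + F_m(X + A_m(X)) at blocks m ∉ S and X ↦ X + Â_m(X) + F_m(X + Â_m(X)) at blocks m ∈ S, and let the centralized trajectory apply the Â_m update at every block; denote the final outputs by X^T and X^*. Then ‖X^T − X^*‖_F ≤ Σ_{m ∉ S} (1+θ_m)·σ_m·∏_{i=m+1}^{M} (1+θ_i)(1+ρ_i), i.e., the fully-local error bound Σ_{m=1}^{M} (1+θ_m)·σ_m·∏_{i=m+1}^{M} (1+θ_i)(1+ρ_i) minus the correction terms Σ_{m ∈ S} (1+θ_m)·σ_m·∏_{i=m+1}^{M} (1+θ_i)(1+ρ_i), provided σ_m is also a valid deviation bound at blocks m ∈ S. (Theorem 3 of the paper: variable synchronization-interval error bound.)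 -/

import Mathlib

/-!
The error `eₙ = ‖X_fed(n) − X_cen(n)‖` obeys the one-block recursion
`eₙ₊₁ ≤ (1 + θ)(1 + ρ) eₙ + (1 + θ) σ`, where the additive term is present only at
local blocks: at a global block both trajectories apply the same update, so the
deviation term vanishes. Unrolling this discrete Grönwall recursion from `e₀ = 0`
gives the sum over the local blocks.
-/

attribute [local instance] Matrix.frobeniusNormedAddCommGroup

open Finset

section TransformerBlock

variable {E : Type*} [SeminormedAddCommGroup E]

def transformerBlock (A F : E → E) (X : E) : E := X + A X + F (X + A X)

variable {A B F : E → E} {ρ θ s : ℝ}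

lemma norm_add_apply_sub_add_apply_le (hA : ∀ x y, ‖A x - A y‖ ≤ ρ * ‖x - y‖)
    (hB : ∀ x, ‖B x - A x‖ ≤ s) (x y : E) :
    ‖(x + B x) - (y + A y)‖ ≤ (1 + ρ) * ‖x - y‖ + s :=
  calc ‖(x + B x) - (y + A y)‖ = ‖(x - y) + (A x - A y) + (B x - A x)‖ := by
        congr 1; abel
    _ ≤ ‖x - y‖ + ‖A x - A y‖ + ‖B x - A x‖ := norm_add₃_le
    _ ≤ ‖x - y‖ + ρ * ‖x - y‖ + s := by gcongr; exacts [hA x y, hB x]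
    _ = (1 + ρ) * ‖x - y‖ + s := by ring

lemma norm_transformerBlock_sub_le (hA : ∀ x y, ‖A x - A y‖ ≤ ρ * ‖x - y‖)
    (hF : ∀ x y, ‖F x - F y‖ ≤ θ * ‖x - y‖) (hθ : 0 ≤ θ)
    (hB : ∀ x, ‖B x - A x‖ ≤ s) (x y : E) :
    ‖transformerBlock B F x - transformerBlock A F y‖ ≤
      (1 + θ) * (1 + ρ) * ‖x - y‖ + (1 + θ) * s := by
  calc ‖transformerBlock B F x - transformerBlock A F y‖
        = ‖((x + B x) - (y + A y)) + (F (x + B x) - F (y + A y))‖ := by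
          unfold transformerBlock; congr 1; abel
    _ ≤ ‖(x + B x) - (y + A y)‖ + θ * ‖(x + B x) - (y + A y)‖ :=
        (norm_add_le _ _).trans (by gcongr; exact hF _ _)
    _ = (1 + θ) * ‖(x + B x) - (y + A y)‖ := by ring
    _ ≤ (1 + θ) * ((1 + ρ) * ‖x - y‖ + s) :=
        mul_le_mul_of_nonneg_left (norm_add_apply_sub_add_apply_le hA hB x y) (by linarith)
    _ = (1 + θ) * (1 + ρ) * ‖x - y‖ + (1 + θ) * s := by ring

end TransformerBlock

lemma le_sum_mul_prod_of_le_mul_add {e c δ : ℕ → ℝ} {n : ℕ} (h₀ : e 0 ≤ 0)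
    (hc : ∀ k ∈ Icc 1 n, 0 ≤ c k)
    (hstep : ∀ k < n, e (k + 1) ≤ c (k + 1) * e k + δ (k + 1)) :
    e n ≤ ∑ m ∈ Icc 1 n, δ m * ∏ i ∈ Icc (m + 1) n, c i := by
  induction n with
  | zero => simpa using h₀
  | succ n ih =>
    have ih := ih (fun k hk => hc k (Icc_subset_Icc_right n.le_succ hk))
      (fun k hk => hstep k (by omega))
    have hcn : 0 ≤ c (n + 1) := hc _ (mem_Icc.2 ⟨by omega, le_rfl⟩)
    calc e (n + 1) ≤ c (n + 1) * e n + δ (n + 1) := hstep n n.lt_succ_self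
      _ ≤ c (n + 1) * (∑ m ∈ Icc 1 n, δ m * ∏ i ∈ Icc (m + 1) n, c i) + δ (n + 1) := by
          gcongr
      _ = ∑ m ∈ Icc 1 (n + 1), δ m * ∏ i ∈ Icc (m + 1) (n + 1), c i := by
          rw [sum_Icc_succ_top (by omega), Icc_eq_empty (a := n + 1 + 1) (by omega),
            prod_empty, mul_one, mul_sum]
          congr 1
          refine sum_congr rfl fun m hm => ?_
          rw [prod_Icc_succ_top (by have := (mem_Icc.1 hm).2; omega)]
          ring

theorem fedattn_variable_sync_error_bound_general
    (L d : ℕ)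
    (M : ℕ)
    (S : Finset ℕ) (hSsub : S ⊆ Finset.Icc 1 M)
    (A Ahat F : ℕ → Matrix (Fin L) (Fin d) ℝ → Matrix (Fin L) (Fin d) ℝ)
    (ρ θ σ : ℕ → ℝ)
    (hρ : ∀ m ∈ Finset.Icc 1 M, 0 < ρ m)
    (hθ : ∀ m ∈ Finset.Icc 1 M, 0 < θ m)
    (hAhat : ∀ m ∈ Finset.Icc 1 M, ∀ X Y, ‖Ahat m X - Ahat m Y‖ ≤ ρ m * ‖X - Y‖)
    (hF : ∀ m ∈ Finset.Icc 1 M, ∀ X Y, ‖F m X - F m Y‖ ≤ θ m * ‖X - Y‖)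
    (hdev : ∀ m ∈ Finset.Icc 1 M, ∀ X, ‖A m X - Ahat m X‖ ≤ σ m)
    (Xemb : Matrix (Fin L) (Fin d) ℝ)
    (Xfed Xcen : ℕ → Matrix (Fin L) (Fin d) ℝ)
    (hfed0 : Xfed 0 = Xemb) (hcen0 : Xcen 0 = Xemb)
    (hfedLocal : ∀ m < M, (m + 1) ∉ S →
      Xfed (m + 1) =
        Xfed m + A (m + 1) (Xfed m) + F (m + 1) (Xfed m + A (m + 1) (Xfed m)))
    (hfedGlobal : ∀ m < M, (m + 1) ∈ S →
      Xfed (m + 1) =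
        Xfed m + Ahat (m + 1) (Xfed m) + F (m + 1) (Xfed m + Ahat (m + 1) (Xfed m)))
    (hcen : ∀ m < M,
      Xcen (m + 1) =
        Xcen m + Ahat (m + 1) (Xcen m) + F (m + 1) (Xcen m + Ahat (m + 1) (Xcen m))) :
    ‖Xfed M - Xcen M‖ ≤
      ∑ m ∈ Finset.Icc 1 M \ S,
        (1 + θ m) * σ m * ∏ i ∈ Finset.Icc (m + 1) M, (1 + θ i) * (1 + ρ i) ∧
    (∑ m ∈ Finset.Icc 1 M \ S,
        (1 + θ m) * σ m * ∏ i ∈ Finset.Icc (m + 1) M, (1 + θ i) * (1 + ρ i)) =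
      (∑ m ∈ Finset.Icc 1 M,
        (1 + θ m) * σ m * ∏ i ∈ Finset.Icc (m + 1) M, (1 + θ i) * (1 + ρ i)) -
      ∑ m ∈ S,
        (1 + θ m) * σ m * ∏ i ∈ Finset.Icc (m + 1) M, (1 + θ i) * (1 + ρ i) := by
  have hstep : ∀ k < M, ‖Xfed (k + 1) - Xcen (k + 1)‖ ≤
      (1 + θ (k + 1)) * (1 + ρ (k + 1)) * ‖Xfed k - Xcen k‖ +
        if k + 1 ∉ S then (1 + θ (k + 1)) * σ (k + 1) else 0 := by
    intro k hk
    have hmem : k + 1 ∈ Icc 1 M := mem_Icc.2 ⟨by omega, hk⟩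
    rw [hcen k hk]
    by_cases hS : k + 1 ∈ S
    · rw [if_neg (not_not.2 hS), hfedGlobal k hk hS]
      simpa only [transformerBlock, mul_zero, add_zero] using
        norm_transformerBlock_sub_le (B := Ahat (k + 1)) (s := 0) (hAhat _ hmem) (hF _ hmem)
          (hθ _ hmem).le (fun X => by simp) (Xfed k) (Xcen k)
    · rw [if_pos hS, hfedLocal k hk hS]
      exact norm_transformerBlock_sub_le (hAhat _ hmem) (hF _ hmem) (hθ _ hmem).le
        (hdev _ hmem) (Xfed k) (Xcen k)
  refine ⟨?_, sum_sdiff_eq_sub hSsub⟩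
  calc ‖Xfed M - Xcen M‖
      ≤ ∑ m ∈ Icc 1 M, (if m ∉ S then (1 + θ m) * σ m else 0) *
          ∏ i ∈ Icc (m + 1) M, (1 + θ i) * (1 + ρ i) :=
        le_sum_mul_prod_of_le_mul_add (e := fun n => ‖Xfed n - Xcen n‖)
          (by simp [hfed0, hcen0]) (fun k hk => by nlinarith [hθ k hk, hρ k hk]) hstep
    _ = _ := by
        rw [sdiff_eq_filter, sum_filter]
        exact sum_congr rfl fun m _ => by rw [ite_mul, zero_mul]

theorem fedattn_variable_sync_error_bound
    (L d : ℕ) (hL : 0 < L) (hd : 0 < d)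
    (M T : ℕ) (hM : 1 ≤ M)
    (S : Finset ℕ) (hSsub : S ⊆ Finset.Icc 1 M) (hScard : S.card = T)
    (A Ahat F : ℕ → Matrix (Fin L) (Fin d) ℝ → Matrix (Fin L) (Fin d) ℝ)
    (ρ θ σ : ℕ → ℝ)
    (hρ : ∀ m ∈ Finset.Icc 1 M, 0 < ρ m)
    (hθ : ∀ m ∈ Finset.Icc 1 M, 0 < θ m)
    (hσ : ∀ m ∈ Finset.Icc 1 M, 0 ≤ σ m)
    (hAhat : ∀ m ∈ Finset.Icc 1 M, ∀ X Y, ‖Ahat m X - Ahat m Y‖ ≤ ρ m * ‖X - Y‖)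
    (hF : ∀ m ∈ Finset.Icc 1 M, ∀ X Y, ‖F m X - F m Y‖ ≤ θ m * ‖X - Y‖)
    (hdev : ∀ m ∈ Finset.Icc 1 M, ∀ X, ‖A m X - Ahat m X‖ ≤ σ m)
    (Xemb : Matrix (Fin L) (Fin d) ℝ)
    (Xfed Xcen : ℕ → Matrix (Fin L) (Fin d) ℝ)
    (hfed0 : Xfed 0 = Xemb) (hcen0 : Xcen 0 = Xemb)
    (hfedLocal : ∀ m < M, (m + 1) ∉ S →
      Xfed (m + 1) =
        Xfed m + A (m + 1) (Xfed m) + F (m + 1) (Xfed m + A (m + 1) (Xfed m)))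
    (hfedGlobal : ∀ m < M, (m + 1) ∈ S →
      Xfed (m + 1) =
        Xfed m + Ahat (m + 1) (Xfed m) + F (m + 1) (Xfed m + Ahat (m + 1) (Xfed m)))
    (hcen : ∀ m < M,
      Xcen (m + 1) =
        Xcen m + Ahat (m + 1) (Xcen m) + F (m + 1) (Xcen m + Ahat (m + 1) (Xcen m))) :
    ‖Xfed M - Xcen M‖ ≤
      ∑ m ∈ Finset.Icc 1 M \ S,
        (1 + θ m) * σ m * ∏ i ∈ Finset.Icc (m + 1) M, (1 + θ i) * (1 + ρ i) ∧
    (∑ m ∈ Finset.Icc 1 M \ S,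
        (1 + θ m) * σ m * ∏ i ∈ Finset.Icc (m + 1) M, (1 + θ i) * (1 + ρ i)) =
      (∑ m ∈ Finset.Icc 1 M,
        (1 + θ m) * σ m * ∏ i ∈ Finset.Icc (m + 1) M, (1 + θ i) * (1 + ρ i)) -
      ∑ m ∈ S,
        (1 + θ m) * σ m * ∏ i ∈ Finset.Icc (m + 1) M, (1 + θ i) * (1 + ρ i) :=
  fedattn_variable_sync_error_bound_general L d M S hSsub A Ahat F ρ θ σ hρ hθ hAhat hF hdev Xemb
    Xfed Xcen hfed0 hcen0 hfedLocal hfedGlobal hcen
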